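/- Let k and w be positive integers and let A be the adjacency matrix of a regular tournament of order 2k+1 with valency k. Let C be the block matrix of order (4k+2)w consisting of 2w × 2w blocks of size (2k+1)×(2k+1), in which the (i,j) block equals A when the block-row index i is odd and equals Aᵀ when i is even (so the block rows alternate between rows of all A's and rows of all Aᵀ's). Then C is the adjacency matrix of a directed strongly regular graph with parameters ((4k+2)w, 2kw, kw, (k−1)w, kw). -/

import Mathlib

open Matrix Kronecker

/-- The all-ones square matrix over `ℤ` indexed by `α`. -/
def allOnes (α : Type*) : Matrix α α ℤ := Matrix.of fun _ _ => 1

/-- `B` is the adjacency matrix of a directed strongly regular graph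
with parameters `(n, k, t, l, m)`. -/
def IsAdjDSRG {α : Type*} [Fintype α] [DecidableEq α]
    (B : Matrix α α ℤ) (n k t l m : ℤ) : Prop :=
  (Fintype.card α : ℤ) = n ∧
  (∀ i j, B i j = 0 ∨ B i j = 1) ∧
  (∀ i, B i i = 0) ∧
  B * B = t • (1 : Matrix α α ℤ) + l • B + m • (allOnes α - 1 - B) ∧
  B * allOnes α = k • allOnes α ∧
  allOnes α * B = k • allOnes α

/-- `A` is the adjacency matrix of a regular tournament of order `n` with valency `k`. -/
def IsRegularTournament {n : ℕ} (k : ℕ) (A : Matrix (Fin n) (Fin n) ℤ) : Prop :=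
  (∀ i j, A i j = 0 ∨ A i j = 1) ∧
  (∀ i, A i i = 0) ∧
  A + Aᵀ = allOnes (Fin n) - 1 ∧
  A * allOnes (Fin n) = (k : ℤ) • allOnes (Fin n) ∧
  allOnes (Fin n) * A = (k : ℤ) • allOnes (Fin n)

/-- The block matrix `M(X) = [[X, Xᵀ + I], [X + I, Xᵀ]]`. -/
def MBlock {α : Type*} [DecidableEq α] (X : Matrix α α ℤ) :
    Matrix (α ⊕ α) (α ⊕ α) ℤ :=
  Matrix.fromBlocks X (Xᵀ + 1) (X + 1) Xᵀ

/-!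
Every block row of `C` is constant: its `s`-th block row repeats `B s`, where `B s` is `A` or `Aᵀ`
according to the parity of `s`. Hence the `s`-th block row of `C²` repeats
`B s * ∑ u, B u = w • B s * (A + Aᵀ) = w • B s * (J - I) = w • (k • J - B s)`,
that is `C² = k w J - w C`, which is the DSRG equation with `t = μ = k w` and `λ = (k - 1) w`.
Row and column sums come out the same way from `B s * J = k • J` and `J * (J - I) = 2k • J`.
-/

theorem Fin.sum_ite_mod_two_eq_zero {M : Type*} [AddCommMonoid M] (w : ℕ) (a b : M) :
    ∑ s : Fin (2 * w), (if (s : ℕ) % 2 = 0 then a else b) = w • (a + b) := by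
  rw [Fin.sum_univ_eq_sum_range (fun s => if s % 2 = 0 then a else b)]
  induction w with
  | zero => simp
  | succ w ih =>
    rw [show 2 * (w + 1) = 2 * w + 1 + 1 by ring, Finset.sum_range_succ, Finset.sum_range_succ,
      ih, succ_nsmul]
    have hodd : (2 * w + 1) % 2 = 1 := by omega
    simp only [Nat.mul_mod_right, hodd, if_true, one_ne_zero, if_false, add_assoc]

theorem allOnes_transpose (α : Type*) : (allOnes α)ᵀ = allOnes α := rfl

theorem allOnes_mul_allOnes (α : Type*) [Fintype α] :
    allOnes α * allOnes α = (Fintype.card α : ℤ) • allOnes α := by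
  ext i j
  simp [allOnes, mul_apply]

def constRowBlocks {ι α R : Type*} (B : ι → Matrix α α R) : Matrix (ι × α) (ι × α) R :=
  of fun p q => B p.1 p.2 q.2

theorem constRowBlocks_allOnes {ι α : Type*} :
    constRowBlocks (fun _ : ι => allOnes α) = allOnes (ι × α) := rfl

theorem constRowBlocks_mul_constRowBlocks {ι α R : Type*} [Fintype ι] [Fintype α]
    [NonUnitalNonAssocSemiring R] (B B' : ι → Matrix α α R) :
    constRowBlocks B * constRowBlocks B' = constRowBlocks fun s => B s * ∑ u, B' u := by
  ext ⟨s, i⟩ ⟨t, j⟩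
  simp only [constRowBlocks, mul_apply, of_apply, Fintype.sum_prod_type, Matrix.sum_apply,
    Finset.mul_sum]
  exact Finset.sum_comm

theorem isAdjDSRG_constRowBlocks {ι α : Type*} [Fintype ι] [DecidableEq ι] [Fintype α]
    [DecidableEq α] (k w : ℕ) (hι : Fintype.card ι = 2 * w) (hα : Fintype.card α = 2 * k + 1)
    (B : ι → Matrix α α ℤ) (h01 : ∀ s i j, B s i j = 0 ∨ B s i j = 1)
    (hdiag : ∀ s i, B s i i = 0)
    (hrow : ∀ s, B s * allOnes α = (k : ℤ) • allOnes α)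
    (hsum : ∑ s, B s = (w : ℤ) • (allOnes α - 1)) :
    IsAdjDSRG (constRowBlocks B)
      ((4 * (k : ℤ) + 2) * w) (2 * (k : ℤ) * w) ((k : ℤ) * w)
      (((k : ℤ) - 1) * w) ((k : ℤ) * w) := by
  refine ⟨?_, fun p q => h01 p.1 p.2 q.2, fun p => hdiag p.1 p.2, ?_, ?_, ?_⟩
  · rw [Fintype.card_prod, hι, hα]
    push_cast
    ring
  · have hsq (s : ι) : B s * ∑ u, B u = (w : ℤ) • ((k : ℤ) • allOnes α - B s) := by
      rw [hsum, Matrix.mul_smul, Matrix.mul_sub, hrow, Matrix.mul_one]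
    rw [constRowBlocks_mul_constRowBlocks, funext hsq]
    ext ⟨s, i⟩ ⟨t, j⟩
    simp only [constRowBlocks, allOnes, of_apply, Matrix.add_apply, Matrix.sub_apply,
      Matrix.smul_apply, smul_eq_mul]
    ring
  · have hrowSum (s : ι) : B s * ∑ _ : ι, allOnes α = (2 * (k : ℤ) * w) • allOnes α := by
      rw [Finset.sum_const, Finset.card_univ, hι, Matrix.mul_smul, hrow]
      module
    rw [← constRowBlocks_allOnes, constRowBlocks_mul_constRowBlocks, funext hrowSum]
    rfl
  · have hcolSum : allOnes α * ∑ s, B s = (2 * (k : ℤ) * w) • allOnes α := by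
      rw [hsum, Matrix.mul_smul, Matrix.mul_sub, allOnes_mul_allOnes, Matrix.mul_one, hα]
      push_cast
      module
    rw [← constRowBlocks_allOnes, constRowBlocks_mul_constRowBlocks, hcolSum]
    rfl

theorem IsRegularTournament.transpose {n k : ℕ} {A : Matrix (Fin n) (Fin n) ℤ}
    (hA : IsRegularTournament k A) : IsRegularTournament k Aᵀ := by
  obtain ⟨h01, hdiag, hskew, hrow, hcol⟩ := hA
  refine ⟨fun i j => h01 j i, hdiag, by rw [transpose_transpose, add_comm, hskew], ?_, ?_⟩
  · simpa only [transpose_mul, transpose_smul, allOnes_transpose]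
      using congrArg Matrix.transpose hcol
  · simpa only [transpose_mul, transpose_smul, allOnes_transpose]
      using congrArg Matrix.transpose hrow

theorem stmt6_general (k w : ℕ)
    (A : Matrix (Fin (2 * k + 1)) (Fin (2 * k + 1)) ℤ)
    (hA : IsRegularTournament k A) :
    let C : Matrix (Fin (2 * w) × Fin (2 * k + 1)) (Fin (2 * w) × Fin (2 * k + 1)) ℤ :=
      Matrix.of fun p q => if (p.1 : ℕ) % 2 = 0 then A p.2 q.2 else Aᵀ p.2 q.2
    IsAdjDSRG C
      ((4 * (k : ℤ) + 2) * w) (2 * (k : ℤ) * w) ((k : ℤ) * w)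
      (((k : ℤ) - 1) * w) ((k : ℤ) * w) := by
  intro C
  let B : Fin (2 * w) → Matrix (Fin (2 * k + 1)) (Fin (2 * k + 1)) ℤ :=
    fun s => if (s : ℕ) % 2 = 0 then A else Aᵀ
  have hC : C = constRowBlocks B := by
    ext p q
    simp only [C, B, constRowBlocks, of_apply]
    split_ifs <;> rfl
  have hB : ∀ s, IsRegularTournament k (B s) := fun s => by
    simp only [B]
    split_ifs
    exacts [hA, hA.transpose]
  have hsum : ∑ s, B s = (w : ℤ) • (allOnes _ - 1) := by
    rw [Fin.sum_ite_mod_two_eq_zero, hA.2.2.1, natCast_zsmul]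
  rw [hC]
  exact isAdjDSRG_constRowBlocks k w (Fintype.card_fin _) (Fintype.card_fin _) B
    (fun s => (hB s).1) (fun s => (hB s).2.1) (fun s => (hB s).2.2.2.1) hsum

/-- Lemma 4(2): the block matrix of order `(4k+2)w` whose block rows alternate
between rows of `A`'s and rows of `Aᵀ`'s (block `(i,j)` is `A` when the 1-based
block-row index `i` is odd, i.e. the 0-based index is even, and `Aᵀ` otherwise),
built from a regular tournament of order `2k+1`, is the adjacency matrix of a
DSRG `((4k+2)w, 2kw, kw, (k-1)w, kw)`. -/
theorem stmt6 (k w : ℕ) (hk : 0 < k) (hw : 0 < w)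
    (A : Matrix (Fin (2 * k + 1)) (Fin (2 * k + 1)) ℤ)
    (hA : IsRegularTournament k A) :
    let C : Matrix (Fin (2 * w) × Fin (2 * k + 1)) (Fin (2 * w) × Fin (2 * k + 1)) ℤ :=
      Matrix.of fun p q => if (p.1 : ℕ) % 2 = 0 then A p.2 q.2 else Aᵀ p.2 q.2
    IsAdjDSRG C
      ((4 * (k : ℤ) + 2) * w) (2 * (k : ℤ) * w) ((k : ℤ) * w)
      (((k : ℤ) - 1) * w) ((k : ℤ) * w) :=
  stmt6_general k w A hA
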